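/- In the Farey tree Σ, every vertex has degree exactly 3; that is, every Farey triangle is adjacent in Σ to exactly three other Farey triangles. -/

import Mathlib

/-- A Farey vertex is an element of `ℚ ∪ {∞}`; `none` represents `∞`. -/
abbrev FareyVertex := Option ℚ

/-- The numerator of the reduced form `a/b` (with `b ≥ 0`) of a Farey vertex; `∞ = 1/0`. -/
def fnum : FareyVertex → ℤ
  | none => 1
  | some r => r.num

/-- The denominator of the reduced form `a/b` (with `b ≥ 0`) of a Farey vertex; `∞ = 1/0`. -/
def fden : FareyVertex → ℤ
  | none => 0
  | some r => (r.den : ℤ)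

/-- Two Farey vertices with reduced forms `a/b` and `c/d` are Farey-neighbors if `|ad - bc| = 1`. -/
def FareyNeighbor (x y : FareyVertex) : Prop :=
  |fnum x * fden y - fden x * fnum y| = 1

/-- A Farey triangle: a set of three distinct pairwise Farey-neighbor Farey vertices. -/
@[ext]
structure FareyTriangle where
  verts : Finset FareyVertex
  card_eq : verts.card = 3
  neighbors : ∀ x ∈ verts, ∀ y ∈ verts, x ≠ y → FareyNeighbor x y

/-- The Farey tree `Σ`: vertices are the Farey triangles, two triangles being adjacent
if and only if their intersection has exactly two elements. -/
def fareyTree : SimpleGraph FareyTriangle where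
  Adj T T' := (T.verts ∩ T'.verts).card = 2
  symm := by
    constructor
    intro T T' h
    try dsimp only at h ⊢
    rwa [Finset.inter_comm]
  loopless := by
    constructor
    intro T h
    try dsimp only at h
    rw [Finset.inter_self, T.card_eq] at h
    omega

/-- The Farey vertex represented by the (not necessarily reduced) fraction `a/b`,
with the conventions `a/b = (-a)/(-b)` and `x/0 = ∞`. -/
def mkFarey (a b : ℤ) : FareyVertex :=
  if b = 0 then none else some ((a : ℚ) / (b : ℚ))

lemma neighbor_int_succ (i : ℤ) :
    FareyNeighbor (some (i : ℚ)) (some ((i + 1 : ℤ) : ℚ)) := by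
  have hn : (((i + 1 : ℤ) : ℚ)).num = i + 1 := Rat.num_intCast _
  have hd : (((i + 1 : ℤ) : ℚ)).den = 1 := Rat.den_intCast _
  simp only [FareyNeighbor, fnum, fden, hn, hd, Rat.num_intCast, Rat.den_intCast]
  simp

lemma neighbor_int_inf (i : ℤ) : FareyNeighbor (some (i : ℚ)) none := by
  simp [FareyNeighbor, fnum, fden]

lemma neighbor_symm {x y : FareyVertex} (h : FareyNeighbor x y) : FareyNeighbor y x := by
  unfold FareyNeighbor at h ⊢
  rw [← abs_neg]
  convert h using 2
  ring

/-- `△⁽ⁱ⁾`: the Farey triangle with vertices `i`, `i+1` and `∞`. -/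
def stdTriangle (i : ℤ) : FareyTriangle where
  verts := {some (i : ℚ), some ((i + 1 : ℤ) : ℚ), none}
  card_eq := by
    have h1 : (some (i : ℚ) : FareyVertex) ≠ some ((i + 1 : ℤ) : ℚ) := by
      simp only [ne_eq, Option.some.injEq]
      intro h
      have : (i : ℚ) = (i : ℚ) + 1 := by push_cast at h ⊢; linarith
      linarith
    simp [Finset.card_insert_of_notMem, h1]
  neighbors := by
    intro x hx y hy hxy
    have h1 := neighbor_int_succ i
    have h2 := neighbor_int_inf i
    have h3 := neighbor_int_inf (i + 1)
    simp only [Finset.mem_insert, Finset.mem_singleton] at hx hy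
    rcases hx with rfl | rfl | rfl <;> rcases hy with rfl | rfl | rfl <;>
      first
        | exact absurd rfl hxy
        | assumption
        | exact neighbor_symm h1
        | exact neighbor_symm h2
        | exact neighbor_symm h3

/-- `S p q` is the sum of the partial quotients in the expansion of `p/q`
as a regular continued fraction (for coprime `p ≥ 0`, `q ≥ 1`), with `S 0 1 = 0`. -/
def S (p q : ℕ) : ℕ :=
  if h : q = 0 then 0
  else p / q + S q (p % q)
termination_by q
decreasing_by exact Nat.mod_lt p (Nat.pos_of_ne_zero h)

/-!
Identify a Farey vertex with the primitive vector `±(a, b)` of its reduced form; two vertices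
are neighbours when the two vectors form a basis of `ℤ²`. If `x, y` are neighbours, Cramer's
rule shows that the common neighbours of `x` and `y` are exactly `x + y` and `x - y`, and these
differ since their determinant is `∓2`. So every edge `{x, y}` of a Farey triangle `{x, y, z}`
lies in exactly one other Farey triangle, and `T' ↦ T ∩ T'` maps the neighbours of `T` in `Σ`
bijectively onto the three edges of `T`.
-/

theorem FareyNeighbor.ne {x y : FareyVertex} (h : FareyNeighbor x y) : x ≠ y := by
  rintro rfl
  simp [FareyNeighbor, mul_comm] at h

theorem mkFarey_fnum_fden (v : FareyVertex) : mkFarey (fnum v) (fden v) = v := by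
  cases v with
  | none => rfl
  | some r => simp [mkFarey, fnum, fden, r.den_nz, Rat.num_div_den]

theorem mkFarey_neg_neg (p q : ℤ) : mkFarey (-p) (-q) = mkFarey p q := by
  simp [mkFarey, neg_div_neg_eq]

theorem mul_eq_mul_of_mkFarey_eq {p q r s : ℤ} (h : mkFarey p q = mkFarey r s) : p * s = q * r := by
  unfold mkFarey at h
  split_ifs at h with hq hs hs
  · simp [hq, hs]
  · rw [Option.some_inj, div_eq_div_iff (by exact_mod_cast hq) (by exact_mod_cast hs)] at h
    exact_mod_cast h.trans (mul_comm _ _)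

theorem fnum_fden_mkFarey_of_pos {p q : ℤ} (hq : 0 < q) (h : IsCoprime p q) :
    fnum (mkFarey p q) = p ∧ fden (mkFarey p q) = q := by
  rw [Int.isCoprime_iff_nat_coprime] at h
  simp only [mkFarey, hq.ne', if_false, fnum, fden]
  exact ⟨Rat.num_div_eq_of_coprime hq h, Rat.den_div_eq_of_coprime hq h⟩

theorem fnum_fden_mkFarey {p q : ℤ} (h : IsCoprime p q) :
    (fnum (mkFarey p q) = p ∧ fden (mkFarey p q) = q) ∨
      (fnum (mkFarey p q) = -p ∧ fden (mkFarey p q) = -q) := by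
  rcases lt_trichotomy q 0 with hq | rfl | hq
  · right
    rw [← mkFarey_neg_neg]
    exact fnum_fden_mkFarey_of_pos (neg_pos.2 hq) h.neg_neg
  · rcases Int.isUnit_iff.1 (isCoprime_zero_right.1 h) with rfl | rfl
    · exact Or.inl ⟨rfl, rfl⟩
    · exact Or.inr ⟨rfl, rfl⟩
  · exact Or.inl (fnum_fden_mkFarey_of_pos hq h)

theorem isCoprime_of_abs_sub_eq_one {a b p q : ℤ} (h : |a * q - b * p| = 1) : IsCoprime p q := by
  rcases (abs_eq zero_le_one).1 h with h | h
  · exact ⟨-b, a, by linear_combination h⟩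
  · exact ⟨b, -a, by linear_combination -h⟩

theorem fareyNeighbor_mkFarey_iff (x : FareyVertex) {p q : ℤ} (h : IsCoprime p q) :
    FareyNeighbor x (mkFarey p q) ↔ |fnum x * q - fden x * p| = 1 := by
  rcases fnum_fden_mkFarey h with ⟨hp, hq⟩ | ⟨hp, hq⟩
  · rw [FareyNeighbor, hp, hq]
  · rw [FareyNeighbor, hp, hq, show fnum x * -q - fden x * -p = -(fnum x * q - fden x * p) by ring,
      abs_neg]

theorem fareyNeighbor_mkFarey_of_abs_eq_one {x : FareyVertex} {p q : ℤ}
    (h : |fnum x * q - fden x * p| = 1) : FareyNeighbor x (mkFarey p q) :=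
  (fareyNeighbor_mkFarey_iff x (isCoprime_of_abs_sub_eq_one h)).2 h

theorem eq_add_or_eq_sub_of_abs_det_eq_one {a b c d e f : ℤ} (hac : |a * d - b * c| = 1)
    (hae : |a * f - b * e| = 1) (hce : |c * f - d * e| = 1) :
    (e = a + c ∧ f = b + d) ∨ (e = -(a + c) ∧ f = -(b + d)) ∨
      (e = a - c ∧ f = b - d) ∨ (e = -(a - c) ∧ f = -(b - d)) := by
  -- Cramer's rule in the basis `(a, b)`, `(c, d)`, all three determinants being `±1`
  have he : e * (a * d - b * c) = -(c * f - d * e) * a + (a * f - b * e) * c := by ring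
  have hf : f * (a * d - b * c) = -(c * f - d * e) * b + (a * f - b * e) * d := by ring
  generalize a * d - b * c = D at hac he hf
  generalize a * f - b * e = N at hae he hf
  generalize c * f - d * e = M at hce he hf
  rw [abs_eq zero_le_one] at hac hae hce
  rcases hac with rfl | rfl <;> rcases hae with rfl | rfl <;> rcases hce with rfl | rfl <;> omega

theorem fareyNeighbor_and_fareyNeighbor_iff {x y v : FareyVertex} (hxy : FareyNeighbor x y) :
    FareyNeighbor x v ∧ FareyNeighbor y v ↔
      v = mkFarey (fnum x + fnum y) (fden x + fden y) ∨
        v = mkFarey (fnum x - fnum y) (fden x - fden y) := by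
  constructor
  · rintro ⟨hxv, hyv⟩
    rw [← mkFarey_fnum_fden v]
    rcases eq_add_or_eq_sub_of_abs_det_eq_one hxy hxv hyv with
      ⟨he, hf⟩ | ⟨he, hf⟩ | ⟨he, hf⟩ | ⟨he, hf⟩ <;>
      simp only [he, hf, mkFarey_neg_neg, true_or, or_true]
  · rintro (rfl | rfl) <;> constructor <;>
      refine fareyNeighbor_mkFarey_of_abs_eq_one (Eq.trans ?_ hxy) <;>
      first
        | (congr 1; ring1)
        | (rw [← abs_neg]; congr 1; ring1)

theorem mkFarey_add_ne_mkFarey_sub {x y : FareyVertex} (hxy : FareyNeighbor x y) :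
    mkFarey (fnum x + fnum y) (fden x + fden y) ≠
      mkFarey (fnum x - fnum y) (fden x - fden y) := by
  intro h
  have h2 : 2 * (fnum x * fden y - fden x * fnum y) = 0 := by
    linear_combination -mul_eq_mul_of_mkFarey_eq h
  rw [FareyNeighbor, abs_eq zero_le_one] at hxy
  omega

theorem existsUnique_fareyNeighbor_ne {x y z : FareyVertex} (hxy : FareyNeighbor x y)
    (hxz : FareyNeighbor x z) (hyz : FareyNeighbor y z) :
    ∃! w, (FareyNeighbor x w ∧ FareyNeighbor y w) ∧ w ≠ z := by
  have hne := mkFarey_add_ne_mkFarey_sub hxy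
  have hz := (fareyNeighbor_and_fareyNeighbor_iff hxy).1 ⟨hxz, hyz⟩
  simp only [fareyNeighbor_and_fareyNeighbor_iff hxy]
  rcases hz with rfl | rfl
  · exact ⟨_, ⟨Or.inr rfl, hne.symm⟩, by rintro w ⟨rfl | rfl, hw⟩ <;> tauto⟩
  · exact ⟨_, ⟨Or.inl rfl, hne⟩, by rintro w ⟨rfl | rfl, hw⟩ <;> tauto⟩

theorem ne_of_inter_eq_of_insert_eq {α : Type*} [DecidableEq α] {s t e : Finset α} {z w : α}
    (he : s ∩ t = e) (hz : z ∉ e) (hs : insert z e = s) (ht : insert w e = t) : w ≠ z := by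
  rintro rfl
  exact hz (he ▸ Finset.mem_inter.2
    ⟨hs ▸ Finset.mem_insert_self _ _, ht ▸ Finset.mem_insert_self _ _⟩)

namespace FareyTriangle

def ofNeighbors {w x y : FareyVertex} (hwx : FareyNeighbor w x) (hwy : FareyNeighbor w y)
    (hxy : FareyNeighbor x y) : FareyTriangle where
  verts := {w, x, y}
  card_eq := Finset.card_eq_three.2 ⟨w, x, y, hwx.ne, hwy.ne, hxy.ne, rfl⟩
  neighbors := by
    simp only [Finset.mem_insert, Finset.mem_singleton]
    rintro u (rfl | rfl | rfl) v (rfl | rfl | rfl) huv <;>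
      first
        | exact absurd rfl huv
        | assumption
        | exact neighbor_symm ‹_›

theorem exists_insert_eq (T : FareyTriangle) {E : Finset FareyVertex} (hE : E ⊆ T.verts)
    (hcard : E.card = 2) : ∃ z ∉ E, insert z E = T.verts :=
  Finset.exists_eq_insert_iff.2 ⟨hE, by rw [hcard, T.card_eq]⟩

theorem fareyNeighbor_of_insert_eq (T : FareyTriangle) {x y z : FareyVertex} (hxy : x ≠ y)
    (hz : z ∉ ({x, y} : Finset FareyVertex)) (hT : insert z {x, y} = T.verts) :
    FareyNeighbor x y ∧ FareyNeighbor x z ∧ FareyNeighbor y z := by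
  simp only [Finset.mem_insert, Finset.mem_singleton, not_or] at hz
  have hmem : ∀ u ∈ ({z, x, y} : Finset FareyVertex), u ∈ T.verts := fun u hu => hT ▸ hu
  refine ⟨T.neighbors x ?_ y ?_ hxy, T.neighbors x ?_ z ?_ (Ne.symm hz.1),
    T.neighbors y ?_ z ?_ (Ne.symm hz.2)⟩ <;> exact hmem _ (by simp)

theorem injOn_inter_verts (T : FareyTriangle) :
    Set.InjOn (fun T' => T.verts ∩ T'.verts) {T' | fareyTree.Adj T T'} := by
  intro T₁ h₁ T₂ h₂ h
  obtain ⟨x, y, hxy, hE₁⟩ := Finset.card_eq_two.1 h₁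
  have hE₂ : T.verts ∩ T₂.verts = {x, y} := h.symm.trans hE₁
  obtain ⟨z, hz, hTz⟩ :=
    T.exists_insert_eq (hE₁ ▸ Finset.inter_subset_left) (Finset.card_pair hxy)
  obtain ⟨w₁, hw₁, hT₁⟩ :=
    T₁.exists_insert_eq (hE₁ ▸ Finset.inter_subset_right) (Finset.card_pair hxy)
  obtain ⟨w₂, hw₂, hT₂⟩ :=
    T₂.exists_insert_eq (hE₂ ▸ Finset.inter_subset_right) (Finset.card_pair hxy)
  obtain ⟨hxy', hxz, hyz⟩ := T.fareyNeighbor_of_insert_eq hxy hz hTz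
  obtain ⟨-, hxw₁, hyw₁⟩ := T₁.fareyNeighbor_of_insert_eq hxy hw₁ hT₁
  obtain ⟨-, hxw₂, hyw₂⟩ := T₂.fareyNeighbor_of_insert_eq hxy hw₂ hT₂
  have hw : w₁ = w₂ := (existsUnique_fareyNeighbor_ne hxy' hxz hyz).unique
    ⟨⟨hxw₁, hyw₁⟩, ne_of_inter_eq_of_insert_eq hE₁ hz hTz hT₁⟩
    ⟨⟨hxw₂, hyw₂⟩, ne_of_inter_eq_of_insert_eq hE₂ hz hTz hT₂⟩
  exact FareyTriangle.ext (hT₁.symm.trans (hw ▸ hT₂))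

theorem surjOn_inter_verts (T : FareyTriangle) :
    Set.SurjOn (fun T' => T.verts ∩ T'.verts) {T' | fareyTree.Adj T T'}
      (T.verts.powersetCard 2) := by
  intro E hE
  rw [Finset.mem_coe, Finset.mem_powersetCard] at hE
  obtain ⟨z, hz, hTz⟩ := T.exists_insert_eq hE.1 hE.2
  obtain ⟨x, y, hxy, rfl⟩ := Finset.card_eq_two.1 hE.2
  obtain ⟨hxy', hxz, hyz⟩ := T.fareyNeighbor_of_insert_eq hxy hz hTz
  obtain ⟨w, ⟨⟨hxw, hyw⟩, hwz⟩, -⟩ := existsUnique_fareyNeighbor_ne hxy' hxz hyz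
  have hwT : w ∉ T.verts := by
    rw [← hTz]
    simp only [Finset.mem_insert, Finset.mem_singleton, not_or]
    exact ⟨hwz, hxw.ne.symm, hyw.ne.symm⟩
  have hinter :
      T.verts ∩ (ofNeighbors (neighbor_symm hxw) (neighbor_symm hyw) hxy').verts = {x, y} :=
    (Finset.inter_insert_of_notMem hwT).trans (Finset.inter_eq_right.2 hE.1)
  exact ⟨_, (congrArg Finset.card hinter).trans (Finset.card_pair hxy), hinter⟩

end FareyTriangle

theorem fareyTree_degree_three (T : FareyTriangle) :
    {T' : FareyTriangle | fareyTree.Adj T T'}.ncard = 3 := by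
  have hbij : Set.BijOn (fun T' => T.verts ∩ T'.verts) {T' | fareyTree.Adj T T'}
      (T.verts.powersetCard 2) :=
    ⟨fun T' h => Finset.mem_powersetCard.2 ⟨Finset.inter_subset_left, h⟩,
      T.injOn_inter_verts, T.surjOn_inter_verts⟩
  rw [hbij.ncard_eq, Set.ncard_coe_finset, Finset.card_powersetCard, T.card_eq]
  rfl
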